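/- arXiv:2507.20112 — 2 statements merged into one kernel-verified Lean document; each statement's English description precedes it below -/
import Mathlib

section
/- Let $f, g, h : \mathcal{P}([M]) \to \mathbb{R}$ be set functions with $f(S) \le g(S) + h(S)$ for all $S$, where $h$ is monotone decreasing and $g$ is monotone increasing and submodular with $g(\emptyset) \ge 0$. Let $\alpha : \mathbb{N} \to [0,1]$ be nondecreasing. Suppose $S^{pr}$ satisfies both $h(\emptyset) \le (1-\alpha(|S^{pr}|)) f(S^{pr})$ and, for every $i \le M$, $(1-\alpha(i)) g(S_i) \le (1-\alpha(|S^{pr}|)) f(S^{pr})$ where $S_i$ is the greedy set of size $i$ for $g$. Then for every $S^* \subseteq [M]$, $(1-\alpha(|S^*|)) f(S^*) \le \frac{2e-1}{e-1} (1-\alpha(|S^{pr}|)) f(S^{pr})$, using that greedy achieves $g(S_i) \ge (1-1/e) \max_{|S|=i} g(S)$. -/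
open scoped BigOperators

/-- Abstract form of Theorem 1 (offline greedy probing guarantee).
Let `f ≤ g + h` with `h` monotone decreasing and `g` monotone increasing,
submodular, `g ∅ ≥ 0`.  Let `α : ℕ → [0,1]` be nondecreasing, `Sg i` the greedy
set of size `i` for `g` (so that `g (Sg i) ≥ (1 - 1/e) max_{|S|=i} g S`), and let
`Spr` dominate both the no-probing value `h ∅` and all discounted greedy values.
Then `(1 - α|S*|) f S* ≤ ((2e-1)/(e-1)) (1 - α|Spr|) f Spr` for every `S*`. -/
theorem stmt_0 (M : ℕ) (f g h : Finset (Fin M) → ℝ)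
    (hfgh : ∀ S, f S ≤ g S + h S)
    (hhdec : ∀ S T : Finset (Fin M), S ⊆ T → h T ≤ h S)
    (hgmono : ∀ S T : Finset (Fin M), S ⊆ T → g S ≤ g T)
    (hgsub : ∀ S T : Finset (Fin M), g (S ∪ T) + g (S ∩ T) ≤ g S + g T)
    (hg0 : 0 ≤ g ∅)
    (α : ℕ → ℝ) (hα : ∀ i, α i ∈ Set.Icc (0:ℝ) 1) (hαmono : Monotone α)
    (Sg : ℕ → Finset (Fin M)) (hSgcard : ∀ i ≤ M, (Sg i).card = i)
    (hgreedy : ∀ i ≤ M, ∀ S : Finset (Fin M), S.card = i →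
        (1 - 1 / Real.exp 1) * g S ≤ g (Sg i))
    (Spr : Finset (Fin M))
    (h1 : h ∅ ≤ (1 - α Spr.card) * f Spr)
    (h2 : ∀ i ≤ M, (1 - α i) * g (Sg i) ≤ (1 - α Spr.card) * f Spr) :
    ∀ Sstar : Finset (Fin M),
      (1 - α Sstar.card) * f Sstar
        ≤ (2 * Real.exp 1 - 1) / (Real.exp 1 - 1) * ((1 - α Spr.card) * f Spr) := by
  intro Sstar
  have he1 : (1:ℝ) < Real.exp 1 := by
    have := Real.exp_one_gt_d9; linarith
  set V : ℝ := (1 - α Spr.card) * f Spr with hVdef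
  clear hVdef
  clear_value V
  set i := Sstar.card with hidef
  have hi : i ≤ M := by
    have := Finset.card_le_univ Sstar
    simpa [hidef] using this
  have ha0 : (0:ℝ) ≤ 1 - α i := by have := (hα i).2; linarith
  have ha1 : (1:ℝ) - α i ≤ 1 := by have := (hα i).1; linarith
  -- V ≥ 0
  have hSg0 : Sg 0 = ∅ := Finset.card_eq_zero.mp (hSgcard 0 (Nat.zero_le M))
  have hV0 : 0 ≤ V := by
    have h20 := h2 0 (Nat.zero_le M)
    rw [hSg0] at h20
    have ha00 : (0:ℝ) ≤ 1 - α 0 := by have := (hα 0).2; linarith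
    nlinarith [mul_nonneg ha00 hg0]
  -- h part
  have hhS : h Sstar ≤ V := le_trans (hhdec ∅ Sstar (Finset.empty_subset _)) h1
  have hhpart : (1 - α i) * h Sstar ≤ V := by
    nlinarith [mul_nonneg ha0 (sub_nonneg.mpr hhS)]
  -- g part
  have hge := hgreedy i hi Sstar rfl
  have hag : (1 - α i) * g (Sg i) ≤ V := h2 i hi
  have hgpart : (1 - α i) * g Sstar ≤ Real.exp 1 / (Real.exp 1 - 1) * V := by
    have hm := mul_le_mul_of_nonneg_left hge ha0
    have hc : (0:ℝ) < 1 - 1 / Real.exp 1 := by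
      rw [sub_pos, div_lt_one (lt_trans one_pos he1)]; exact he1
    rw [div_mul_eq_mul_div, le_div_iff₀ (by linarith)]
    have hepos : (0:ℝ) < Real.exp 1 := lt_trans one_pos he1
    have key : (1 - α i) * (1 - 1 / Real.exp 1) * g Sstar ≤ V := by
      rw [mul_assoc]; exact le_trans hm hag
    have : (1 - α i) * g Sstar * (Real.exp 1 - 1)
        = ((1 - α i) * (1 - 1 / Real.exp 1) * g Sstar) * Real.exp 1 := by
      field_simp
    rw [this]
    calc ((1 - α i) * (1 - 1 / Real.exp 1) * g Sstar) * Real.exp 1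
        ≤ V * Real.exp 1 := by
          exact mul_le_mul_of_nonneg_right key (le_of_lt hepos)
      _ = Real.exp 1 * V := mul_comm _ _
  -- combine
  have hf : (1 - α i) * f Sstar ≤ (1 - α i) * g Sstar + (1 - α i) * h Sstar := by
    have := mul_le_mul_of_nonneg_left (hfgh Sstar) ha0
    linarith [this]
  have heq : Real.exp 1 / (Real.exp 1 - 1) * V + V
      = (2 * Real.exp 1 - 1) / (Real.exp 1 - 1) * V := by
    have hne : Real.exp 1 - 1 ≠ 0 := by linarith
    field_simp
    ring
  calc (1 - α i) * f Sstar
      ≤ (1 - α i) * g Sstar + (1 - α i) * h Sstar := hf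
    _ ≤ Real.exp 1 / (Real.exp 1 - 1) * V + V := add_le_add hgpart hhpart
    _ = (2 * Real.exp 1 - 1) / (Real.exp 1 - 1) * V := heq
end

section
/- Fix finite sets of plays $[K]$ and arms $[M]$, capacities $N_m \in \mathbb{N}$, and weights $X_{m,k} \ge 0$. For $S \subseteq [M]$ define $h(S)$ as the maximum over families of pairwise disjoint sets $(C_m)_{m \in S}$, $C_m \subseteq [K]$, of $\sum_{m \in S} \mathcal{R}_m(C_m)$, where $\mathcal{R}_m(C_m)$ is the sum of the $\min(N_m, |C_m|)$ largest values among $\{X_{m,k} : k \in C_m\}$. Then $h$ is submodular: for all $S, T \subseteq [M]$, $h(S) + h(T) \ge h(S \cup T) + h(S \cap T)$. -/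
open scoped BigOperators

/-- Sum of the `N` largest elements of a finite multiset of reals. -/
noncomputable def topSum (N : ℕ) (s : Multiset ℝ) : ℝ :=
  ((s.sort (· ≤ ·)).drop (Multiset.card s - N)).sum

/-- Value of the optimal capacitated assignment using only arms in `S`. -/
noncomputable def hOpt (M K : ℕ) (N : Fin M → ℕ) (X : Fin M → Fin K → ℝ)
    (S : Finset (Fin M)) : ℝ :=
  ⨆ C : {C : Fin M → Finset (Fin K) //
          ∀ m₁ ∈ S, ∀ m₂ ∈ S, m₁ ≠ m₂ → Disjoint (C m₁) (C m₂)},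
    ∑ m ∈ S, topSum (N m) (Multiset.map (X m) (C.1 m).val)

/-!
Split arm `m` into `N m` slots. Replacing each `C m` by the plays carrying its `N m` largest
weights, `h(S)` becomes the largest weight of a matching of plays into slots of arms in `S`.
Let `a` be a matching into the slots of `S ∪ T` and `b` one into those of `S ∩ T`. Since `b` is
injective, the chain `i → j → ⋯` with `b j = a i` is determined by its first play, and it cannot
continue past a play whose `a`-slot lies outside `S ∩ T`. Exchanging `a` and `b` on the plays
whose chain reaches an `a`-slot of an arm in `T \ S` therefore keeps both maps injective, and
gives a matching into `S` and one into `T` with the same total weight.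
-/

open Finset Relation

theorem Multiset.exists_le_map_eq_of_le_map {α β : Type*} (f : α → β) {s : Multiset α}
    {u : Multiset β} (h : u ≤ s.map f) : ∃ t ≤ s, t.map f = u := by
  induction s using Quotient.inductionOn
  induction u using Quotient.inductionOn
  obtain ⟨l, hperm, hsub⟩ := Multiset.coe_le.1 h
  obtain ⟨r, hr, rfl⟩ := List.sublist_map_iff.1 hsub
  exact ⟨r, Multiset.coe_le.2 hr.subperm, Quot.sound hperm⟩

theorem topSum_of_card_le {N : ℕ} {s : Multiset ℝ} (h : Multiset.card s ≤ N) :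
    topSum N s = s.sum := by
  rw [topSum, Nat.sub_eq_zero_of_le h, List.drop_zero, ← Multiset.sum_coe, Multiset.sort_eq]

theorem exists_le_card_le_topSum_eq (N : ℕ) (s : Multiset ℝ) :
    ∃ u ≤ s, Multiset.card u ≤ N ∧ topSum N s = u.sum := by
  refine ⟨(s.sort (· ≤ ·)).drop (Multiset.card s - N), ?_, ?_, (Multiset.sum_coe _).symm⟩
  · exact (Multiset.coe_le.2 (List.drop_sublist _ _).subperm).trans_eq (Multiset.sort_eq _ _)
  · simp only [Multiset.coe_card, List.length_drop, Multiset.length_sort]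
    omega

theorem Finset.exists_subset_card_le_topSum_eq {ι : Type*} (N : ℕ) (C : Finset ι) (f : ι → ℝ) :
    ∃ t ⊆ C, #t ≤ N ∧ topSum N (C.val.map f) = ∑ i ∈ t, f i := by
  obtain ⟨u, hu, hcard, hsum⟩ := exists_le_card_le_topSum_eq N (C.val.map f)
  obtain ⟨t, htC, rfl⟩ := Multiset.exists_le_map_eq_of_le_map f hu
  refine ⟨⟨t, Multiset.nodup_of_le htC C.nodup⟩, Multiset.subset_of_le htC, ?_, hsum⟩
  simpa using hcard

section Exchange

variable {ι κ : Type*}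

def IsMatching (x : ι → Option κ) : Prop :=
  ∀ ⦃i j : ι⦄ ⦃s : κ⦄, s ∈ x i → s ∈ x j → i = j

theorem IsMatching.ite {a b : ι → Option κ} (ha : IsMatching a) (hb : IsMatching b)
    {W : ι → Prop} [DecidablePred W] (hW : ∀ ⦃i j s⦄, s ∈ b i → s ∈ a j → (W i ↔ W j)) :
    IsMatching fun i => if W i then b i else a i := by
  intro i j s hi hj
  by_cases hWi : W i <;> by_cases hWj : W j <;> simp only [hWi, hWj, if_true, if_false] at hi hj
  · exact hb hi hj
  · exact absurd ((hW hi hj).1 hWi) hWj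
  · exact absurd ((hW hj hi).1 hWj) hWi
  · exact ha hi hj

variable (U : Set κ) (a b : ι → Option κ)

/-- The plays whose chain `i → j` (where `b j = a i`) reaches a play matched by `a` outside `U`;
`a` and `b` are exchanged on exactly these plays. -/
def EndsOutside (i : ι) : Prop :=
  ∃ r, ReflTransGen (fun i j => ∃ s ∈ a i, s ∈ b j) i r ∧ ∃ s ∈ a r, s ∉ U

variable {U a b} {V : Set κ}

theorem endsOutside_of_mem_of_notMem {i : ι} {s : κ} (hs : s ∈ a i) (hU : s ∉ U) :
    EndsOutside U a b i :=
  ⟨i, .refl, s, hs, hU⟩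

theorem EndsOutside.mem_of_mem (haUV : ∀ i, ∀ s ∈ a i, s ∈ U ∪ V)
    (hbV : ∀ i, ∀ s ∈ b i, s ∈ V) {i : ι} (hi : EndsOutside U a b i) {s : κ} (hs : s ∈ a i) :
    s ∈ V := by
  obtain ⟨r, hir, s', hs', hU⟩ := hi
  rcases hir.cases_head with rfl | ⟨j, ⟨s'', hs'', hj⟩, -⟩
  · obtain rfl : s = s' := Option.some_inj.1 (hs.symm.trans hs')
    exact (haUV i s hs).resolve_left hU
  · obtain rfl : s = s'' := Option.some_inj.1 (hs.symm.trans hs'')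
    exact hbV j s hj

theorem endsOutside_iff_of_mem (hb : IsMatching b) (hbU : ∀ i, ∀ s ∈ b i, s ∈ U)
    {i j : ι} {s : κ} (hi : s ∈ b i) (hj : s ∈ a j) :
    EndsOutside U a b i ↔ EndsOutside U a b j := by
  constructor
  · rintro ⟨r, hir, hr⟩
    exact ⟨r, .head ⟨s, hj, hi⟩ hir, hr⟩
  · rintro ⟨r, hjr, s', hs', hU⟩
    rcases hjr.cases_head with rfl | ⟨i', ⟨s'', hs'', hi'⟩, hi'r⟩
    · obtain rfl : s = s' := Option.some_inj.1 (hj.symm.trans hs')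
      exact absurd (hbU i s hi) hU
    · obtain rfl : s = s'' := Option.some_inj.1 (hj.symm.trans hs'')
      obtain rfl : i = i' := hb hi hi'
      exact ⟨r, hi'r, s', hs', hU⟩

theorem exists_exchange (ha : IsMatching a) (hb : IsMatching b)
    (haUV : ∀ i, ∀ s ∈ a i, s ∈ U ∪ V) (hbUV : ∀ i, ∀ s ∈ b i, s ∈ U ∩ V) :
    ∃ a' b' : ι → Option κ, IsMatching a' ∧ IsMatching b' ∧
      (∀ i, ∀ s ∈ a' i, s ∈ U) ∧ (∀ i, ∀ s ∈ b' i, s ∈ V) ∧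
      ∀ i, (a' i = a i ∧ b' i = b i) ∨ (a' i = b i ∧ b' i = a i) := by
  classical
  have hbU i s (hs : s ∈ b i) : s ∈ U := (hbUV i s hs).1
  have hbV i s (hs : s ∈ b i) : s ∈ V := (hbUV i s hs).2
  set W := EndsOutside U a b
  have hW : ∀ ⦃i j s⦄, s ∈ b i → s ∈ a j → (W i ↔ W j) :=
    fun _ _ _ => endsOutside_iff_of_mem hb hbU
  refine ⟨fun i => if W i then b i else a i, fun i => if W i then a i else b i,
    ha.ite hb hW, hb.ite ha fun i j s hi hj => (hW hj hi).symm, ?_, ?_, ?_⟩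
  · intro i s hs
    by_cases hWi : W i <;> simp only [hWi, if_true, if_false] at hs
    · exact hbU i s hs
    · by_contra hU
      exact hWi (endsOutside_of_mem_of_notMem hs hU)
  · intro i s hs
    by_cases hWi : W i <;> simp only [hWi, if_true, if_false] at hs
    · exact hWi.mem_of_mem haUV hbV hs
    · exact hbV i s hs
  · intro i
    by_cases hWi : W i <;> simp [hWi]

end Exchange

section Slots

variable {ι α : Type*} [Fintype ι] {N : α → ℕ}

def matchingWeight {κ : Type*} (w : ι → κ → ℝ) (x : ι → Option κ) : ℝ :=
  ∑ i, (x i).elim 0 (w i)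

theorem matchingWeight_add_of_swap {κ : Type*} (w : ι → κ → ℝ) {a b a' b' : ι → Option κ}
    (h : ∀ i, (a' i = a i ∧ b' i = b i) ∨ (a' i = b i ∧ b' i = a i)) :
    matchingWeight w a' + matchingWeight w b' = matchingWeight w a + matchingWeight w b := by
  simp only [matchingWeight, ← sum_add_distrib]
  refine sum_congr rfl fun i _ => ?_
  rcases h i with ⟨ha, hb⟩ | ⟨ha, hb⟩ <;> rw [ha, hb]
  exact add_comm _ _

/-- A matching into the slots `⟨m, j⟩`, `j < N m`, is an assignment of plays to arms respecting
the capacities; `armFiber x m` is the set of plays it assigns to arm `m`. -/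
noncomputable def armFiber (x : ι → Option (Σ m, Fin (N m))) (m : α) : Finset ι :=
  open Classical in univ.filter fun i => ∃ j, x i = some ⟨m, j⟩

theorem disjoint_armFiber (x : ι → Option (Σ m, Fin (N m))) {m m' : α} (h : m ≠ m') :
    Disjoint (armFiber x m) (armFiber x m') := by
  simp only [armFiber, disjoint_left, mem_filter, mem_univ, true_and]
  rintro i ⟨j, hj⟩ ⟨j', hj'⟩
  exact h (Sigma.mk.inj_iff.1 (Option.some_inj.1 (hj.symm.trans hj'))).1

theorem IsMatching.card_armFiber_le {x : ι → Option (Σ m, Fin (N m))} (hx : IsMatching x)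
    (m : α) : #(armFiber x m) ≤ N m := by
  simpa using card_le_card_of_forall_subsingleton (t := univ) (fun i j => x i = some ⟨m, j⟩)
    (by simp [armFiber])
    (fun j _ i hi i' hi' => hx hi.2 hi'.2)

theorem matchingWeight_eq_sum_armFiber (X : α → ι → ℝ) {x : ι → Option (Σ m, Fin (N m))}
    {S : Finset α} (hS : ∀ i, ∀ s ∈ x i, s.1 ∈ S) :
    matchingWeight (fun i s => X s.1 i) x = ∑ m ∈ S, ∑ i ∈ armFiber x m, X m i := by
  classical
  rw [sum_comm' (t' := univ) (s' := fun i => ((x i).map Sigma.fst).toFinset)]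
  · refine sum_congr rfl fun i _ => ?_
    cases x i <;> simp
  · intro m i
    cases hxi : x i with
    | none => simp [armFiber, hxi]
    | some s =>
      obtain ⟨m', j⟩ := s
      simp only [armFiber, mem_filter, mem_univ, hxi, Option.some.injEq, Sigma.mk.injEq,
        exists_and_left, true_and, Option.map_some, Option.toFinset_some, mem_singleton, and_true]
      constructor
      · rintro ⟨-, rfl, -⟩
        rfl
      · rintro rfl
        exact ⟨hS i _ hxi, rfl, j, .rfl⟩

theorem exists_isMatching_armFiber_eq {S : Finset α} {t : α → Finset ι}
    (ht : ∀ m₁ ∈ S, ∀ m₂ ∈ S, m₁ ≠ m₂ → Disjoint (t m₁) (t m₂)) (hcard : ∀ m ∈ S, #(t m) ≤ N m) :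
    ∃ x : ι → Option (Σ m, Fin (N m)), IsMatching x ∧ (∀ i, ∀ s ∈ x i, s.1 ∈ S) ∧
      ∀ m ∈ S, armFiber x m = t m := by
  classical
  have e : ∀ m ∈ S, t m ↪ Fin (N m) := fun m hm =>
    (Function.Embedding.nonempty_of_card_le (by simpa using hcard m hm)).some
  let x : ι → Option (Σ m, Fin (N m)) := fun i =>
    if h : ∃ m ∈ S, i ∈ t m then some ⟨h.choose, e _ h.choose_spec.1 ⟨i, h.choose_spec.2⟩⟩
    else none
  have hx_eq : ∀ m (hm : m ∈ S) i (hi : i ∈ t m), x i = some ⟨m, e m hm ⟨i, hi⟩⟩ := by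
    intro m hm i hi
    have h : ∃ m ∈ S, i ∈ t m := ⟨m, hm, hi⟩
    have hsame : ∀ m' (hm' : m' ∈ S) (hi' : i ∈ t m'),
        (⟨m', e m' hm' ⟨i, hi'⟩⟩ : Σ m, Fin (N m)) = ⟨m, e m hm ⟨i, hi⟩⟩ := by
      intro m' hm' hi'
      obtain rfl : m' = m := by_contra fun hne => disjoint_left.1 (ht m' hm' m hm hne) hi' hi
      rfl
    simp only [x, dif_pos h]
    exact congrArg some (hsame _ h.choose_spec.1 h.choose_spec.2)
  have hx_mem : ∀ i s, s ∈ x i → ∃ m, ∃ (hm : m ∈ S) (hi : i ∈ t m), s = ⟨m, e m hm ⟨i, hi⟩⟩ := by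
    intro i s hs
    by_cases h : ∃ m ∈ S, i ∈ t m
    · obtain ⟨m, hm, hi⟩ := h
      exact ⟨m, hm, hi, Option.some_inj.1 (hs.symm.trans (hx_eq m hm i hi))⟩
    · simp [x, dif_neg h] at hs
  refine ⟨x, ?_, fun i s hs => ?_, fun m hm => ?_⟩
  · intro i i' s hi hi'
    obtain ⟨m, hm, hit, rfl⟩ := hx_mem i s hi
    obtain ⟨m', _, hit', h⟩ := hx_mem i' _ hi'
    obtain ⟨rfl, h⟩ := Sigma.mk.inj_iff.1 h
    simpa using (e m hm).injective (eq_of_heq h)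
  · obtain ⟨m, hm, -, rfl⟩ := hx_mem i s hs
    exact hm
  · ext i
    simp only [armFiber, mem_filter, mem_univ, true_and]
    refine ⟨fun ⟨j, hj⟩ => ?_, fun hi => ⟨_, hx_eq m hm i hi⟩⟩
    obtain ⟨m', _, hi, h⟩ := hx_mem i _ hj
    obtain ⟨rfl, -⟩ := Sigma.mk.inj_iff.1 h
    exact hi

end Slots

theorem sum_topSum_le_hOpt {M K : ℕ} (N : Fin M → ℕ) (X : Fin M → Fin K → ℝ)
    {S : Finset (Fin M)} {C : Fin M → Finset (Fin K)}
    (hC : ∀ m₁ ∈ S, ∀ m₂ ∈ S, m₁ ≠ m₂ → Disjoint (C m₁) (C m₂)) :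
    ∑ m ∈ S, topSum (N m) ((C m).val.map (X m)) ≤ hOpt M K N X S :=
  le_ciSup_of_le (Set.finite_range _).bddAbove ⟨C, hC⟩ le_rfl

theorem matchingWeight_le_hOpt {M K : ℕ} {N : Fin M → ℕ} (X : Fin M → Fin K → ℝ)
    {S : Finset (Fin M)} {x : Fin K → Option (Σ m, Fin (N m))} (hx : IsMatching x)
    (hS : ∀ k, ∀ s ∈ x k, s.1 ∈ S) :
    matchingWeight (fun k s => X s.1 k) x ≤ hOpt M K N X S := by
  rw [matchingWeight_eq_sum_armFiber X hS]
  calc ∑ m ∈ S, ∑ k ∈ armFiber x m, X m k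
      = ∑ m ∈ S, topSum (N m) ((armFiber x m).val.map (X m)) :=
        sum_congr rfl fun m _ => (topSum_of_card_le (by simpa using hx.card_armFiber_le m)).symm
    _ ≤ hOpt M K N X S := sum_topSum_le_hOpt N X fun _ _ _ _ => disjoint_armFiber x

theorem exists_isMatching_sum_topSum_eq {M K : ℕ} (N : Fin M → ℕ) (X : Fin M → Fin K → ℝ)
    {S : Finset (Fin M)} {C : Fin M → Finset (Fin K)}
    (hC : ∀ m₁ ∈ S, ∀ m₂ ∈ S, m₁ ≠ m₂ → Disjoint (C m₁) (C m₂)) :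
    ∃ x : Fin K → Option (Σ m, Fin (N m)), IsMatching x ∧ (∀ k, ∀ s ∈ x k, s.1 ∈ S) ∧
      ∑ m ∈ S, topSum (N m) ((C m).val.map (X m)) = matchingWeight (fun k s => X s.1 k) x := by
  choose t htC hcard hsum using fun m => (C m).exists_subset_card_le_topSum_eq (N m) (X m)
  obtain ⟨x, hx, hxS, hfiber⟩ := exists_isMatching_armFiber_eq (N := N) (S := S) (t := t)
    (fun m₁ h₁ m₂ h₂ hne => (hC m₁ h₁ m₂ h₂ hne).mono (htC m₁) (htC m₂)) fun m _ => hcard m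
  refine ⟨x, hx, hxS, ?_⟩
  rw [matchingWeight_eq_sum_armFiber X hxS]
  exact sum_congr rfl fun m hm => by rw [hsum, hfiber m hm]

instance {ι α : Type*} (S : Finset ι) :
    Nonempty {C : ι → Finset α // ∀ m₁ ∈ S, ∀ m₂ ∈ S, m₁ ≠ m₂ → Disjoint (C m₁) (C m₂)} :=
  ⟨⟨fun _ => ∅, fun _ _ _ _ _ => disjoint_bot_left⟩⟩

theorem stmt_2_general (M K : ℕ) (N : Fin M → ℕ) (X : Fin M → Fin K → ℝ)
    (S T : Finset (Fin M)) :
    hOpt M K N X (S ∪ T) + hOpt M K N X (S ∩ T) ≤ hOpt M K N X S + hOpt M K N X T := by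
  refine ciSup_add_ciSup_le fun C D => ?_
  obtain ⟨a, ha, haST, hCa⟩ := exists_isMatching_sum_topSum_eq N X C.2
  obtain ⟨b, hb, hbST, hDb⟩ := exists_isMatching_sum_topSum_eq N X D.2
  obtain ⟨a', b', ha', hb', ha'S, hb'T, hswap⟩ :=
    exists_exchange (U := {s : Σ m, Fin (N m) | s.1 ∈ S}) (V := {s | s.1 ∈ T}) ha hb
      (fun k s hs => mem_union.1 (haST k s hs)) (fun k s hs => mem_inter.1 (hbST k s hs))
  calc _ = matchingWeight _ a' + matchingWeight _ b' := by
        rw [hCa, hDb, matchingWeight_add_of_swap _ hswap]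
    _ ≤ _ := add_le_add (matchingWeight_le_hOpt X ha' ha'S) (matchingWeight_le_hOpt X hb' hb'T)

/-- Lemma 4: the optimal capacitated-assignment value `h` is submodular in the
set of available arms: `h(S) + h(T) ≥ h(S ∪ T) + h(S ∩ T)`. -/
theorem stmt_2 (M K : ℕ) (N : Fin M → ℕ) (X : Fin M → Fin K → ℝ)
    (hX : ∀ m k, 0 ≤ X m k) (S T : Finset (Fin M)) :
    hOpt M K N X (S ∪ T) + hOpt M K N X (S ∩ T) ≤ hOpt M K N X S + hOpt M K N X T :=
  stmt_2_general M K N X S T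
end
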